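/- arXiv:1302.2273 — 4 statements merged into one kernel-verified Lean document; each statement's English description precedes it below -/
import Mathlib

section
/- Let A be a deterministic Moore machine with partial transition function over alphabet Π with distinguished letter b, outputs in a join-semilattice F, and let A_el be its elastification via the b-closure subset construction. Then for every word w on which A has a run ending in state q, A_el has a run on w ending in a set S with q ∈ S, and hence the output of A on w is ≤ the output of A_el on w in the semilattice order. -/
/-- A deterministic Moore machine with a partial transition function over alphabet `A`
and outputs in `F`. -/
structure PMoore (A F : Type) where
  Q : Type
  [dec : DecidableEq Q]
  [fin : Fintype Q]
  init : Q
  step : Q → A → Option Q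
  out : Q → F

attribute [instance] PMoore.dec PMoore.fin

/-- The (partial) run of the machine from a state on a word. -/
def PMoore.runFrom {A F : Type} (M : PMoore A F) : M.Q → List A → Option M.Q
  | q, [] => some q
  | q, a :: w => (M.step q a).bind fun q' => M.runFrom q' w

/-- The (partial) output of the machine on a word. -/
def PMoore.output {A F : Type} (M : PMoore A F) (w : List A) : Option F :=
  (M.runFrom M.init w).map M.out

/-- Elastic: every defined `b`-transition is a self-loop. -/
def PMoore.Elastic {A F : Type} (M : PMoore A F) (b : A) : Prop :=
  ∀ q q', M.step q b = some q' → q' = q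

/-- `R_b(S)`: the set of states reachable from `S` by a (possibly empty) sequence of
`b`-transitions. -/
noncomputable def PMoore.Rb {A F : Type} (M : PMoore A F) (b : A) (S : Finset M.Q) :
    Finset M.Q := by
  classical
  exact Finset.univ.filter fun q' =>
    ∃ q ∈ S, Relation.ReflTransGen (fun x y => M.step x b = some y) q q'

/-- The transition function of the elastification: the `b`-closure subset construction.
On `a ≠ b` a set `S` goes to `R_b(δ(S,a))` (undefined if `δ(S,a)` is empty); on `b`
the set `S` maps to itself provided some state of `S` has a `b`-transition. -/
noncomputable def PMoore.elStep {A F : Type} [DecidableEq A] (M : PMoore A F) (b : A)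
    (S : Finset M.Q) (a : A) : Option (Finset M.Q) := by
  classical
  exact if a = b then
    if ∃ q ∈ S, (M.step q b).isSome then some S else none
  else
    let T : Finset M.Q := Finset.univ.filter fun q' => ∃ q ∈ S, M.step q a = some q'
    if T.Nonempty then some (M.Rb b T) else none

/-- The run of the elastification from a set-state. -/
noncomputable def PMoore.elRunFrom {A F : Type} [DecidableEq A] (M : PMoore A F) (b : A) :
    Finset M.Q → List A → Option (Finset M.Q)
  | S, [] => some S
  | S, a :: w => (M.elStep b S a).bind fun S' => M.elRunFrom b S' w

/-- The run of the elastification on a word, starting from the initial set `R_b({q₀})`. -/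
noncomputable def PMoore.elRun {A F : Type} [DecidableEq A] (M : PMoore A F) (b : A)
    (w : List A) : Option (Finset M.Q) :=
  M.elRunFrom b (M.Rb b {M.init}) w

/-- The output of a set-state of the elastification: the join of the outputs of its
elements (junk value on the empty set). -/
noncomputable def PMoore.joinOut {A F : Type} [SemilatticeSup F] (M : PMoore A F)
    (S : Finset M.Q) : F :=
  if h : S.Nonempty then S.sup' h M.out else M.out M.init

/-- The (partial) output of the elastification on a word. -/
noncomputable def PMoore.elOutput {A F : Type} [DecidableEq A] [SemilatticeSup F]
    (M : PMoore A F) (b : A) (w : List A) : Option F :=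
  (M.elRun b w).map M.joinOut

/-! The run of `A` is shadowed by the run of `A_el` under the invariant "the current state of
`A` lies in the current set `S`, and `S` is closed under `b`-transitions". Closure is what
makes the self-loop `δ_el(S, b) = S` sound, and `R_b` restores it after every other letter.
The output inequality is then the fact that an element lies below the join of a set containing
it. -/

namespace PMoore

variable {A F : Type} (M : PMoore A F) (b : A)

@[simp]
lemma mem_Rb {S : Finset M.Q} {q' : M.Q} :
    q' ∈ M.Rb b S ↔ ∃ q ∈ S, Relation.ReflTransGen (fun x y => M.step x b = some y) q q' := by
  classical
  simp [Rb]

lemma subset_Rb (S : Finset M.Q) : S ⊆ M.Rb b S :=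
  fun q hq => (M.mem_Rb b).2 ⟨q, hq, .refl⟩

def BClosed (S : Finset M.Q) : Prop :=
  ∀ x ∈ S, ∀ y, M.step x b = some y → y ∈ S

lemma bClosed_Rb (S : Finset M.Q) : M.BClosed b (M.Rb b S) := by
  intro x hx y hxy
  obtain ⟨q, hq, hqx⟩ := (M.mem_Rb b).1 hx
  exact (M.mem_Rb b).2 ⟨q, hq, hqx.tail hxy⟩

lemma exists_elStep_of_step [DecidableEq A] {S : Finset M.Q} (hS : M.BClosed b S)
    {q q' : M.Q} {a : A} (hq : q ∈ S) (hstep : M.step q a = some q') :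
    ∃ S', M.elStep b S a = some S' ∧ q' ∈ S' ∧ M.BClosed b S' := by
  classical
  by_cases hab : a = b
  · subst hab
    have hdef : ∃ x ∈ S, (M.step x a).isSome := ⟨q, hq, by simp [hstep]⟩
    exact ⟨S, by simp [elStep, hdef], hS q hq q' hstep, hS⟩
  · set T : Finset M.Q := Finset.univ.filter fun p => ∃ x ∈ S, M.step x a = some p with hT
    have hq'T : q' ∈ T := by simpa [hT] using ⟨q, hq, hstep⟩
    refine ⟨M.Rb b T, ?_, M.subset_Rb b T hq'T, M.bClosed_Rb b T⟩
    simp only [elStep, if_neg hab, ← hT]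
    exact if_pos ⟨q', hq'T⟩

lemma exists_elRunFrom_of_runFrom [DecidableEq A] {S : Finset M.Q} (hS : M.BClosed b S)
    {q q' : M.Q} (hq : q ∈ S) {w : List A} (hrun : M.runFrom q w = some q') :
    ∃ S', M.elRunFrom b S w = some S' ∧ q' ∈ S' := by
  induction w generalizing S q with
  | nil =>
    rw [runFrom, Option.some_inj] at hrun
    exact ⟨S, rfl, hrun ▸ hq⟩
  | cons a w ih =>
    obtain ⟨p, hstep, hrun⟩ := Option.bind_eq_some_iff.1 hrun
    obtain ⟨T, hT, hpT, hTclosed⟩ := M.exists_elStep_of_step b hS hq hstep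
    obtain ⟨S', hS', hq'⟩ := ih hTclosed hpT hrun
    exact ⟨S', by simp [elRunFrom, hT, hS'], hq'⟩

lemma out_le_joinOut [SemilatticeSup F] {S : Finset M.Q} {q : M.Q} (hq : q ∈ S) :
    M.out q ≤ M.joinOut S := by
  rw [joinOut, dif_pos ⟨q, hq⟩]
  exact S.le_sup' M.out hq

end PMoore

/-- For every word `w` on which `A` has a run ending in state `q`, the elastification
`A_el` has a run on `w` ending in a set `S` with `q ∈ S`, and hence the output of `A`
on `w` is `≤` the output of `A_el` on `w`. -/
theorem stmt4 {A F : Type} [DecidableEq A] [SemilatticeSup F] (M : PMoore A F) (b : A) :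
    ∀ (w : List A) (q : M.Q), M.runFrom M.init w = some q →
      ∃ S : Finset M.Q, M.elRun b w = some S ∧ q ∈ S ∧ M.out q ≤ M.joinOut S := by
  intro w q hrun
  have hinit : M.init ∈ M.Rb b {M.init} := M.subset_Rb b _ (Finset.mem_singleton_self _)
  obtain ⟨S, hS, hqS⟩ := M.exists_elRunFrom_of_runFrom b (M.bClosed_Rb b _) hinit hrun
  exact ⟨S, hS, hqS, M.out_le_joinOut hqS⟩
end

section
/- In the elastification A_el of a Moore machine A, if a word w leads A_el to a set state S, then for every state q ∈ S there exists a word w' leading A to q such that w and w' become equal after deleting all occurrences of the letter b; i.e., w and w' have the same b-free projection. -/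
/-! A state `q` in the set that `A_el` reaches on `w` is traced back letter by letter: a letter
`a ≠ b` is replaced by `a` followed by the `b`-run that the closure `R_b` used to reach the next
state, and a letter `b` (on which `A_el` stays put) is dropped. Neither change alters the
`b`-free projection, and the same applies to the initial closure `R_b({q₀})`. -/

theorem List.filter_ne_replicate_append {A : Type} [DecidableEq A] (b : A) (n : ℕ) (u : List A) :
    (List.replicate n b ++ u).filter (· ≠ b) = u.filter (· ≠ b) := by
  simp [List.filter_append]

namespace PMoore

variable {A F : Type} (M : PMoore A F)

theorem runFrom_append (p : M.Q) (u v : List A) :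
    M.runFrom p (u ++ v) = (M.runFrom p u).bind (M.runFrom · v) := by
  induction u generalizing p with
  | nil => rfl
  | cons a u ih =>
    simp only [List.cons_append, runFrom, Option.bind_assoc, ih]

theorem runFrom_append_of_eq_some {p q : M.Q} {u : List A} (h : M.runFrom p u = some q)
    (v : List A) : M.runFrom p (u ++ v) = M.runFrom q v := by
  rw [runFrom_append, h, Option.bind_some]

theorem exists_runFrom_replicate_of_reflTransGen {b : A} {p q : M.Q}
    (h : Relation.ReflTransGen (fun x y => M.step x b = some y) p q) :
    ∃ n, M.runFrom p (List.replicate n b) = some q := by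
  induction h using Relation.ReflTransGen.head_induction_on with
  | refl => exact ⟨0, rfl⟩
  | head hstep _ ih =>
    obtain ⟨n, hn⟩ := ih
    exact ⟨n + 1, by simp only [List.replicate_succ, runFrom, hstep, Option.bind_some, hn]⟩

theorem exists_runFrom_replicate_of_mem_Rb {b : A} {S : Finset M.Q} {q : M.Q}
    (hq : q ∈ M.Rb b S) : ∃ p ∈ S, ∃ n, M.runFrom p (List.replicate n b) = some q := by
  simp only [Rb, Finset.mem_filter, Finset.mem_univ, true_and] at hq
  obtain ⟨p, hp, hpq⟩ := hq
  exact ⟨p, hp, M.exists_runFrom_replicate_of_reflTransGen hpq⟩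

variable [DecidableEq A]

theorem exists_runFrom_of_elStep {b a : A} {S S' : Finset M.Q} (h : M.elStep b S a = some S')
    {q : M.Q} (hq : q ∈ S') :
    ∃ p ∈ S, ∃ u : List A, M.runFrom p u = some q ∧ [a].filter (· ≠ b) = u.filter (· ≠ b) := by
  unfold elStep at h
  split_ifs at h with hab
  · cases h
    exact ⟨q, hq, [], rfl, by simp [hab]⟩
  · obtain ⟨-, ⟨⟩⟩ := Option.ite_none_right_eq_some.mp h
    obtain ⟨p', hp', n, hn⟩ := M.exists_runFrom_replicate_of_mem_Rb hq
    simp only [Finset.mem_filter, Finset.mem_univ, true_and] at hp'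
    obtain ⟨p, hp, hpa⟩ := hp'
    refine ⟨p, hp, a :: List.replicate n b, ?_, ?_⟩
    · simp only [runFrom, hpa, Option.bind_some, hn]
    · simp [hab]

theorem exists_runFrom_of_elRunFrom (b : A) (w : List A) {S₀ S : Finset M.Q}
    (h : M.elRunFrom b S₀ w = some S) {q : M.Q} (hq : q ∈ S) :
    ∃ p ∈ S₀, ∃ u : List A, M.runFrom p u = some q ∧ w.filter (· ≠ b) = u.filter (· ≠ b) := by
  induction w generalizing S₀ with
  | nil =>
    cases h
    exact ⟨q, hq, [], rfl, rfl⟩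
  | cons a w ih =>
    obtain ⟨S₁, hstep, hrun⟩ := Option.bind_eq_some_iff.mp h
    obtain ⟨p₁, hp₁, u, hu, hwu⟩ := ih hrun
    obtain ⟨p, hp, v, hv, hav⟩ := M.exists_runFrom_of_elStep hstep hp₁
    refine ⟨p, hp, v ++ u, by rw [M.runFrom_append_of_eq_some hv, hu], ?_⟩
    rw [List.filter_append, ← hav, ← hwu, ← List.filter_append, List.singleton_append]

end PMoore

/-- If a word `w` leads `A_el` to a set-state `S`, then for every `q ∈ S` there is a
word `w'` leading `A` to `q` such that `w` and `w'` have the same `b`-free projection. -/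
theorem stmt5 {A F : Type} [DecidableEq A] (M : PMoore A F) (b : A)
    (w : List A) (S : Finset M.Q) (h : M.elRun b w = some S) :
    ∀ q ∈ S, ∃ w' : List A, M.runFrom M.init w' = some q ∧
      w.filter (fun a => decide (a ≠ b)) = w'.filter (fun a => decide (a ≠ b)) := by
  intro q hq
  obtain ⟨p, hp, u, hu, hwu⟩ := M.exists_runFrom_of_elRunFrom b w h hq
  obtain ⟨init, hinit, n, hn⟩ := M.exists_runFrom_replicate_of_mem_Rb hp
  rw [Finset.mem_singleton] at hinit
  subst hinit
  exact ⟨List.replicate n b ++ u, by rw [M.runFrom_append_of_eq_some hn, hu],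
    by rw [hwu, List.filter_ne_replicate_append]⟩
end

section
/- For every QDA A over a formula lattice with pairwise inequivalent formulas, there is a unique minimal QDA A' (unique up to isomorphism) that accepts the same set of valuation words, and A' is the minimal Moore machine computing the function from symbolic words to formulas induced by A. -/
/-- A quantified data automaton (QDA), viewed as a deterministic total Moore machine
over a symbolic alphabet `P`, outputting data formulas from a lattice carrier `F`. -/
structure QDA (P F : Type) where
  Q : Type
  [fin : Fintype Q]
  init : Q
  step : Q → P → Q
  out : Q → F

attribute [instance] QDA.fin

/-- The extended transition function on symbolic words. -/
def QDA.run {P F : Type} (A : QDA P F) : A.Q → List P → A.Q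
  | q, [] => q
  | q, a :: w => A.run (A.step q a) w

/-- The language of valuation words of a QDA: a valuation word consists of a symbolic
word `u` together with data values `ρ` for the quantified variables `Y`; it is accepted
iff `ρ` satisfies the formula output at the state reached on `u` (`sat` is the
satisfaction relation of the formula lattice). -/
def QDA.Lval {P F Y D : Type} (sat : F → (Y → D) → Prop) (A : QDA P F) :
    Set (List P × (Y → D)) :=
  {v | sat (A.out (A.run A.init v.1)) v.2}

/-! Myhill–Nerode for Moore machines. Since the formulas are pairwise inequivalent, two QDAs
accept the same valuation words iff they compute the same function `f` from symbolic words to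
formulas. The states of the minimal machine for `f` are its quotients `w ↦ f (u ++ w)`. Any
machine `B` computing `f` contains a copy of it: send the quotient of `u` to the state `B`
reaches on `u`, whose residual function is that quotient, so the map is injective. If `B` has
no more states, this map is a bijection, hence residuals of `B` are injective, and a map
preserving residuals into such a machine commutes with the transitions. -/

namespace QDA

variable {P F : Type}

theorem run_append (A : QDA P F) (q : A.Q) (u v : List P) :
    A.run q (u ++ v) = A.run (A.run q u) v := by
  induction u generalizing q with
  | nil => rfl
  | cons a u ih => exact ih (A.step q a)

def residual (A : QDA P F) (q : A.Q) (w : List P) : F :=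
  A.out (A.run q w)

def output (A : QDA P F) : List P → F :=
  A.residual A.init

theorem residual_run (A : QDA P F) (q : A.Q) (u : List P) :
    A.residual (A.run q u) = fun w => A.residual q (u ++ w) := by
  funext w
  simp only [residual, run_append]

theorem Lval_eq_iff {Y D : Type} {sat : F → (Y → D) → Prop}
    (hineq : ∀ α β : F, (∀ ρ : Y → D, sat α ρ ↔ sat β ρ) → α = β) (A B : QDA P F) :
    Lval sat B = Lval sat A ↔ B.output = A.output := by
  constructor
  · intro h
    funext u
    exact hineq _ _ fun ρ => Set.ext_iff.mp h (u, ρ)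
  · intro h
    ext ⟨u, ρ⟩
    exact iff_of_eq congr(sat ($h u) ρ)

def IsHom (M B : QDA P F) (h : M.Q → B.Q) : Prop :=
  h M.init = B.init ∧ (∀ q a, h (M.step q a) = B.step (h q) a) ∧ ∀ q, B.out (h q) = M.out q

theorem isHom_of_residual_eq {M B : QDA P F} (hinj : Function.Injective B.residual)
    (h : M.Q → B.Q) (hres : ∀ q, B.residual (h q) = M.residual q) (hout : B.output = M.output) :
    IsHom M B h := by
  refine ⟨hinj ((hres _).trans hout.symm), fun q a => hinj ?_, fun q => congrFun (hres q) []⟩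
  calc B.residual (h (M.step q a))
      = M.residual (M.run q [a]) := hres _
    _ = B.residual (B.run (h q) [a]) := by rw [residual_run, residual_run, hres]

def quotients (f : List P → F) : Set (List P → F) :=
  Set.range fun u w => f (u ++ w)

theorem quotients_output_finite (A : QDA P F) : (quotients A.output).Finite := by
  refine (Set.finite_range A.residual).subset ?_
  rintro _ ⟨u, rfl⟩
  exact ⟨A.run A.init u, A.residual_run A.init u⟩

noncomputable def minimal (f : List P → F) (hf : (quotients f).Finite) : QDA P F where
  Q := quotients f
  fin := hf.fintype
  init := ⟨f, [], rfl⟩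
  step g a := ⟨fun w => g.1 (a :: w), by
    obtain ⟨u, hu⟩ := g.2
    exact ⟨u ++ [a], by simp only [← hu, List.append_assoc, List.singleton_append]⟩⟩
  out g := g.1 []

section minimal

variable {f : List P → F} {hf : (quotients f).Finite}

theorem minimal_run (g : (minimal f hf).Q) (u : List P) :
    ((minimal f hf).run g u).1 = fun w => g.1 (u ++ w) := by
  induction u generalizing g with
  | nil => rfl
  | cons a u ih => exact ih ((minimal f hf).step g a)

theorem residual_minimal (g : (minimal f hf).Q) : (minimal f hf).residual g = g.1 := by
  funext w
  change ((minimal f hf).run g w).1 [] = g.1 w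
  rw [minimal_run]
  exact congrArg g.1 (List.append_nil w)

theorem residual_minimal_injective : Function.Injective (minimal f hf).residual :=
  fun g g' h => Subtype.ext <| by rwa [residual_minimal, residual_minimal] at h

theorem output_minimal : (minimal f hf).output = f :=
  residual_minimal _

noncomputable def stateOfQuotient (B : QDA P F) (g : (minimal f hf).Q) : B.Q :=
  B.run B.init g.2.choose

variable {B : QDA P F}

theorem residual_stateOfQuotient (hB : B.output = f) (g : (minimal f hf).Q) :
    B.residual (stateOfQuotient B g) = (minimal f hf).residual g := by
  rw [residual_minimal, stateOfQuotient, residual_run]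
  exact (congrArg (fun h w => h (g.2.choose ++ w)) hB).trans g.2.choose_spec

theorem stateOfQuotient_injective (hB : B.output = f) :
    Function.Injective (stateOfQuotient (hf := hf) B) := fun g g' h =>
  residual_minimal_injective <| by
    rw [← residual_stateOfQuotient hB, ← residual_stateOfQuotient hB, h]

theorem card_minimal_le (hB : B.output = f) :
    Fintype.card (minimal f hf).Q ≤ Fintype.card B.Q :=
  Fintype.card_le_of_injective _ (stateOfQuotient_injective hB)

theorem exists_equiv_minimal_of_card_le (hB : B.output = f)
    (hcard : Fintype.card B.Q ≤ Fintype.card (minimal f hf).Q) :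
    ∃ e : (minimal f hf).Q ≃ B.Q, IsHom (minimal f hf) B e := by
  have hbij : Function.Bijective (stateOfQuotient (hf := hf) B) :=
    (Fintype.bijective_iff_injective_and_card _).mpr
      ⟨stateOfQuotient_injective hB, le_antisymm (card_minimal_le hB) hcard⟩
  have hres := residual_stateOfQuotient (hf := hf) hB
  have hinj : Function.Injective B.residual := by
    intro p p' h
    obtain ⟨g, rfl⟩ := hbij.2 p
    obtain ⟨g', rfl⟩ := hbij.2 p'
    rw [hres, hres] at h
    rw [residual_minimal_injective h]
  exact ⟨Equiv.ofBijective _ hbij,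
    isHom_of_residual_eq hinj _ hres (hB.trans output_minimal.symm)⟩

end minimal

end QDA

/-- For every QDA `A` over a lattice of pairwise inequivalent formulas, there is a
minimal QDA `A'`, unique up to isomorphism, accepting the same valuation words; `A'` is
the minimal Moore machine computing the symbolic-word-to-formula function induced
by `A`. -/
theorem stmt14 {P F Y D : Type} (sat : F → (Y → D) → Prop)
    (hineq : ∀ α β : F, (∀ ρ : Y → D, sat α ρ ↔ sat β ρ) → α = β)
    (A : QDA P F) :
    ∃ A' : QDA P F,
      -- `A'` accepts the same valuation words as `A`
      QDA.Lval sat A' = QDA.Lval sat A ∧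
      -- `A'` is minimal among such QDAs
      (∀ B : QDA P F, QDA.Lval sat B = QDA.Lval sat A →
        Fintype.card A'.Q ≤ Fintype.card B.Q) ∧
      -- `A'` is unique up to isomorphism among minimal such QDAs
      (∀ B : QDA P F, QDA.Lval sat B = QDA.Lval sat A →
        (∀ C : QDA P F, QDA.Lval sat C = QDA.Lval sat A →
          Fintype.card B.Q ≤ Fintype.card C.Q) →
        ∃ e : A'.Q ≃ B.Q,
          e A'.init = B.init ∧
          (∀ q a, e (A'.step q a) = B.step (e q) a) ∧
          (∀ q, B.out (e q) = A'.out q)) ∧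
      -- `A'` computes the symbolic-word-to-formula function induced by `A` ...
      (∀ u : List P, A'.out (A'.run A'.init u) = A.out (A.run A.init u)) ∧
      -- ... and is the minimal Moore machine computing this function
      (∀ B : QDA P F,
        (∀ u : List P, B.out (B.run B.init u) = A.out (A.run A.init u)) →
        Fintype.card A'.Q ≤ Fintype.card B.Q) := by
  set M := QDA.minimal A.output A.quotients_output_finite
  have hsame (B : QDA P F) := QDA.Lval_eq_iff hineq A B
  have hM : QDA.Lval sat M = QDA.Lval sat A := (hsame M).mpr QDA.output_minimal
  refine ⟨M, hM, fun B hB => QDA.card_minimal_le ((hsame B).mp hB), ?_,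
    congrFun QDA.output_minimal, fun B hB => QDA.card_minimal_le (funext hB)⟩
  intro B hB hBmin
  exact QDA.exists_equiv_minimal_of_card_le ((hsame B).mp hB) (hBmin M hM)
end

section
/- Angluin-style learning with a formula-valued observation table: if T : (S ∪ SΣ)·E → Γ is a closed and consistent observation table for a target function f : Σ* → Γ (with S prefix-closed, E suffix-closed, ε ∈ S ∩ E, and T(u·e) = f(u·e) for all entries), then the hypothesis Moore machine constructed from the table—with states the distinct rows of S, transitions given by row(u·a), initial state row(ε), and output T(u·ε)—is well defined and agrees with f on all words in (S ∪ SΣ)·E. -/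
/-!
The states of the hypothesis are the classes of `S` under row equality. Consistency makes the
transition `row(u) ↦ row(u')`, for a `u' ∈ S` with `row(u·a) = row(u')` supplied by closedness,
independent of the representative `u`. Prefix-closedness of `S` then shows by induction that the
machine reaches `row(u)` on reading `u ∈ S`, and suffix-closedness of `E` shows that reading
`e ∈ E` from `row(u)` outputs the table entry `T(u·e)`; a word `v·a` of `SΣ` reaches some
`row(u')` with `row(v·a) = row(u')`, which reduces that case to the first.
-/

/-- A deterministic finite Moore machine over input alphabet `A` with outputs in `G`. -/
structure Moore (A G : Type) where
  Q : Type
  [fin : Fintype Q]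
  init : Q
  step : Q → A → Q
  out : Q → G

attribute [instance] Moore.fin

/-- The extended transition function. -/
def Moore.run {A G : Type} (M : Moore A G) : M.Q → List A → M.Q
  | q, [] => q
  | q, a :: w => M.run (M.step q a) w

/-- `M` computes the function `f : A* → G`. -/
def Moore.Computes {A G : Type} (M : Moore A G) (f : List A → G) : Prop :=
  ∀ w, f w = M.out (M.run M.init w)

/-- Rows of the observation table agree: `row(u) = row(u')` means the target function
agrees on `u·e` and `u'·e` for every suffix `e ∈ E`. -/
def RowEq {A G : Type} (f : List A → G) (E : Set (List A)) (u u' : List A) : Prop :=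
  ∀ e ∈ E, f (u ++ e) = f (u' ++ e)

theorem Moore.run_append {A G : Type} (M : Moore A G) (q : M.Q) (w₁ w₂ : List A) :
    M.run q (w₁ ++ w₂) = M.run (M.run q w₁) w₂ := by
  induction w₁ generalizing q with
  | nil => rfl
  | cons a w ih => exact ih _

section HypothesisMachine

variable {A G : Type} {f : List A → G} {E : Set (List A)}

theorem RowEq.symm {u v : List A} (h : RowEq f E u v) : RowEq f E v u :=
  fun e he => (h e he).symm

theorem RowEq.trans {u v w : List A} (h₁ : RowEq f E u v) (h₂ : RowEq f E v w) :
    RowEq f E u w :=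
  fun e he => (h₁ e he).trans (h₂ e he)

variable (f) (S E : Set (List A))

def rowSetoid : Setoid S where
  r u v := RowEq f E u v
  iseqv := ⟨fun _ _ _ => rfl, RowEq.symm, RowEq.trans⟩

def IsClosedTable : Prop :=
  ∀ u ∈ S, ∀ a : A, ∃ u' ∈ S, RowEq f E (u ++ [a]) u'

def IsConsistentTable : Prop :=
  ∀ u ∈ S, ∀ u' ∈ S, RowEq f E u u' → ∀ a : A, RowEq f E (u ++ [a]) (u' ++ [a])

variable {f S E}

noncomputable def closingRep (hclosed : IsClosedTable f S E) (u : S) (a : A) : S :=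
  ⟨(hclosed u u.2 a).choose, (hclosed u u.2 a).choose_spec.1⟩

theorem rowEq_closingRep (hclosed : IsClosedTable f S E) (u : S) (a : A) :
    RowEq f E (u ++ [a]) (closingRep hclosed u a) :=
  (hclosed u u.2 a).choose_spec.2

noncomputable def hypothesisMoore (hSfin : S.Finite) (hεS : [] ∈ S) (hεE : [] ∈ E)
    (hclosed : IsClosedTable f S E) (hconsistent : IsConsistentTable f S E) : Moore A G where
  Q := Quotient (rowSetoid f S E)
  fin := haveI := hSfin.to_subtype; Fintype.ofFinite _
  init := ⟦⟨[], hεS⟩⟧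
  step q a := Quotient.map (sa := rowSetoid f S E) (sb := rowSetoid f S E)
    (closingRep hclosed · a)
    (fun ⦃u v⦄ (huv : RowEq f E u v) => (rowEq_closingRep hclosed u a).symm.trans
      ((hconsistent u u.2 v v.2 huv a).trans (rowEq_closingRep hclosed v a))) q
  out := Quotient.lift (fun u : S => f u) (fun u v huv => by simpa using huv [] hεE)

variable {hSfin : S.Finite} {hεS : [] ∈ S} {hεE : [] ∈ E}
  {hclosed : IsClosedTable f S E} {hconsistent : IsConsistentTable f S E}

local notation "M" => hypothesisMoore hSfin hεS hεE hclosed hconsistent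

theorem hypothesisMoore_out_mk (u : S) : (M).out ⟦u⟧ = f u :=
  rfl

theorem hypothesisMoore_step_mk {u u' : S} {a : A} (h : RowEq f E (u ++ [a]) u') :
    (M).step ⟦u⟧ a = ⟦u'⟧ :=
  Quotient.sound ((rowEq_closingRep hclosed u a).symm.trans h)

theorem hypothesisMoore_run_init (hSpre : ∀ u v : List A, u ++ v ∈ S → u ∈ S)
    (u : List A) (hu : u ∈ S) : (M).run (M).init u = ⟦⟨u, hu⟩⟧ := by
  induction u using List.reverseRecOn with
  | nil => rfl
  | append_singleton v a ih =>
    have hv : v ∈ S := hSpre v [a] hu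
    rw [Moore.run_append, ih hv]
    exact hypothesisMoore_step_mk fun _ _ => rfl

theorem hypothesisMoore_out_run_mk (hEsuf : ∀ u v : List A, u ++ v ∈ E → v ∈ E)
    (e : List A) (he : e ∈ E) (u : S) : (M).out ((M).run ⟦u⟧ e) = f (u ++ e) := by
  induction e generalizing u with
  | nil =>
    rw [List.append_nil]
    exact hypothesisMoore_out_mk u
  | cons a e ih =>
    have he' : e ∈ E := hEsuf [a] e he
    obtain ⟨u', hu', hrow⟩ := hclosed u u.2 a
    change (M).out ((M).run ((M).step ⟦u⟧ a) e) = _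
    rw [hypothesisMoore_step_mk (u' := ⟨u', hu'⟩) hrow, ih he' ⟨u', hu'⟩]
    simpa only [List.append_assoc, List.singleton_append] using (hrow e he').symm

theorem hypothesisMoore_exists_run_init (hSpre : ∀ u v : List A, u ++ v ∈ S → u ∈ S)
    {u : List A} (hu : u ∈ S ∨ ∃ v ∈ S, ∃ a : A, u = v ++ [a]) :
    ∃ u' : S, (M).run (M).init u = ⟦u'⟧ ∧ RowEq f E u u' := by
  rcases hu with hu | ⟨v, hv, a, rfl⟩
  · exact ⟨⟨u, hu⟩, hypothesisMoore_run_init hSpre u hu, fun _ _ => rfl⟩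
  · obtain ⟨u', hu', hrow⟩ := hclosed v hv a
    refine ⟨⟨u', hu'⟩, ?_, hrow⟩
    rw [Moore.run_append, hypothesisMoore_run_init hSpre v hv]
    exact hypothesisMoore_step_mk hrow

theorem hypothesisMoore_out_run_init (hSpre : ∀ u v : List A, u ++ v ∈ S → u ∈ S)
    (hEsuf : ∀ u v : List A, u ++ v ∈ E → v ∈ E)
    {u : List A} (hu : u ∈ S ∨ ∃ v ∈ S, ∃ a : A, u = v ++ [a]) {e : List A} (he : e ∈ E) :
    (M).out ((M).run (M).init (u ++ e)) = f (u ++ e) := by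
  obtain ⟨u', hrun, hrow⟩ := hypothesisMoore_exists_run_init hSpre hu
  rw [Moore.run_append, hrun, hypothesisMoore_out_run_mk hEsuf e he]
  exact (hrow e he).symm

end HypothesisMachine

theorem stmt17_general {A G : Type} (f : List A → G) (S E : Set (List A))
    (hSfin : S.Finite)
    (hSpre : ∀ u v : List A, u ++ v ∈ S → u ∈ S)
    (hEsuf : ∀ u v : List A, u ++ v ∈ E → v ∈ E)
    (hεS : ([] : List A) ∈ S) (hεE : ([] : List A) ∈ E)
    (hclosed : ∀ u ∈ S, ∀ a : A, ∃ u' ∈ S, RowEq f E (u ++ [a]) u')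
    (hconsistent : ∀ u ∈ S, ∀ u' ∈ S, RowEq f E u u' →
      ∀ a : A, RowEq f E (u ++ [a]) (u' ++ [a])) :
    ∃ (H : Moore A G) (st : List A → H.Q),
      -- the states are exactly the distinct rows of elements of `S`
      (∀ u ∈ S, ∀ u' ∈ S, (st u = st u' ↔ RowEq f E u u')) ∧
      (∀ q : H.Q, ∃ u ∈ S, st u = q) ∧
      -- initial state is `row(ε)`
      H.init = st [] ∧
      -- transitions are given by `row(u·a)`
      (∀ u ∈ S, ∀ a : A, ∀ u' ∈ S, RowEq f E (u ++ [a]) u' → H.step (st u) a = st u') ∧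
      -- the output of `row(u)` is `T(u·ε) = f u`
      (∀ u ∈ S, H.out (st u) = f u) ∧
      -- the hypothesis agrees with `f` on all words of `(S ∪ SΣ)·E`
      (∀ u : List A, (u ∈ S ∨ ∃ v ∈ S, ∃ a : A, u = v ++ [a]) →
        ∀ e ∈ E, H.out (H.run H.init (u ++ e)) = f (u ++ e)) := by
  classical
  let H := hypothesisMoore hSfin hεS hεE hclosed hconsistent
  -- words outside `S` are sent to an arbitrary state
  let st : List A → H.Q := fun u => if hu : u ∈ S then ⟦⟨u, hu⟩⟧ else H.init
  have hst : ∀ u (hu : u ∈ S), st u = ⟦⟨u, hu⟩⟧ := fun u hu => dif_pos hu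
  refine ⟨H, st, fun u hu u' hu' => ?_, fun q => ?_, (hst [] hεS).symm,
    fun u hu a u' hu' hrow => ?_, fun u hu => ?_,
    fun u hu e he => hypothesisMoore_out_run_init hSpre hEsuf hu he⟩
  · rw [hst u hu, hst u' hu']
    exact Quotient.eq
  · obtain ⟨⟨u, hu⟩, rfl⟩ := Quotient.exists_rep q
    exact ⟨u, hu, hst u hu⟩
  · rw [hst u hu, hst u' hu']
    exact hypothesisMoore_step_mk hrow
  · rw [hst u hu]
    exact hypothesisMoore_out_mk ⟨u, hu⟩

/-- Angluin-style learning with an observation table: from a closed and consistent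
observation table for `f` (with `S` prefix-closed, `E` suffix-closed, `ε ∈ S ∩ E`, and
entries given by `f`), the hypothesis Moore machine — states the distinct rows of `S`,
transitions given by `row(u·a)`, initial state `row(ε)`, output `T(u·ε) = f u` — is
well defined and agrees with `f` on all words in `(S ∪ SΣ)·E`. -/
theorem stmt17 {A G : Type} (f : List A → G) (S E : Set (List A))
    (hSfin : S.Finite) (hEfin : E.Finite)
    (hSpre : ∀ u v : List A, u ++ v ∈ S → u ∈ S)
    (hEsuf : ∀ u v : List A, u ++ v ∈ E → v ∈ E)
    (hεS : ([] : List A) ∈ S) (hεE : ([] : List A) ∈ E)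
    (hclosed : ∀ u ∈ S, ∀ a : A, ∃ u' ∈ S, RowEq f E (u ++ [a]) u')
    (hconsistent : ∀ u ∈ S, ∀ u' ∈ S, RowEq f E u u' →
      ∀ a : A, RowEq f E (u ++ [a]) (u' ++ [a])) :
    ∃ (H : Moore A G) (st : List A → H.Q),
      -- the states are exactly the distinct rows of elements of `S`
      (∀ u ∈ S, ∀ u' ∈ S, (st u = st u' ↔ RowEq f E u u')) ∧
      (∀ q : H.Q, ∃ u ∈ S, st u = q) ∧
      -- initial state is `row(ε)`
      H.init = st [] ∧
      -- transitions are given by `row(u·a)`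
      (∀ u ∈ S, ∀ a : A, ∀ u' ∈ S, RowEq f E (u ++ [a]) u' → H.step (st u) a = st u') ∧
      -- the output of `row(u)` is `T(u·ε) = f u`
      (∀ u ∈ S, H.out (st u) = f u) ∧
      -- the hypothesis agrees with `f` on all words of `(S ∪ SΣ)·E`
      (∀ u : List A, (u ∈ S ∨ ∃ v ∈ S, ∃ a : A, u = v ++ [a]) →
        ∀ e ∈ E, H.out (H.run H.init (u ++ e)) = f (u ++ e)) :=
  stmt17_general f S E hSfin hSpre hEsuf hεS hεE hclosed hconsistent
end
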